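/- (Theorem 4, item 1) Suppose eTRS satisfies the Slater condition and (t*, λ*) with λ* ≥ 0 maximizes k(t,λ) := (Δ+1)λmin(D(t,λ)) − t − λc over t ∈ ℝ, λ ≥ 0. Assume λmin(D(t*,λ*)) < λmin(A), and let y = (y0, z) ∈ ℝ × ℝⁿ be a unit-norm eigenvector of D(t*,λ*) corresponding to λmin(D(t*,λ*)). Then y0 ≠ 0, strong duality holds for eTRS (p* = d*), and x* := z / y0 is a global optimal solution of eTRS. -/

import Mathlib

open Matrix

/-- The smallest eigenvalue of a real (symmetric) matrix. -/
noncomputable def lambdaMin {ι : Type} [Fintype ι] (M : Matrix ι ι ℝ) : ℝ :=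
  sInf {μ : ℝ | ∃ v : ι → ℝ, v ≠ 0 ∧ M.mulVec v = μ • v}

/-- The multiplicity of the smallest eigenvalue: the dimension of Null(M - λmin(M)·I). -/
noncomputable def eigMult {ι : Type} [Fintype ι] [DecidableEq ι] (M : Matrix ι ι ℝ) : ℕ :=
  Module.finrank ℝ (LinearMap.ker (M - lambdaMin M • (1 : Matrix ι ι ℝ)).mulVecLin)

/-- The bordered matrix D(t) = [[t, -aᵀ],[-a, A]]. -/
noncomputable def borderD {n : ℕ} (A : Matrix (Fin n) (Fin n) ℝ) (a : Fin n → ℝ) (t : ℝ) :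
    Matrix (Unit ⊕ Fin n) (Unit ⊕ Fin n) ℝ :=
  Matrix.fromBlocks (Matrix.of fun (_ : Unit) (_ : Unit) => t)
    (Matrix.of fun (_ : Unit) (j : Fin n) => -a j)
    (Matrix.of fun (i : Fin n) (_ : Unit) => -a i) A

/-- The bordered matrix D(t,λ) = [[t, (-a + (λ/2)b)ᵀ],[-a + (λ/2)b, A]]. -/
noncomputable def borderD2 {n : ℕ} (A : Matrix (Fin n) (Fin n) ℝ) (a b : Fin n → ℝ)
    (t l : ℝ) : Matrix (Unit ⊕ Fin n) (Unit ⊕ Fin n) ℝ :=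
  borderD A (fun j => a j - (l / 2) * b j) t

/-- The objective xᵀAx - 2aᵀx. -/
noncomputable def objQ {n : ℕ} (A : Matrix (Fin n) (Fin n) ℝ) (a : Fin n → ℝ)
    (x : Fin n → ℝ) : ℝ :=
  x ⬝ᵥ A.mulVec x - 2 * (a ⬝ᵥ x)

/-- The optimal value p* of eTRS. -/
noncomputable def pstar {n : ℕ} (A : Matrix (Fin n) (Fin n) ℝ) (a b : Fin n → ℝ)
    (c Δ : ℝ) : ℝ :=
  sInf {v : ℝ | ∃ x : Fin n → ℝ, x ⬝ᵥ x ≤ Δ ∧ b ⬝ᵥ x ≤ c ∧ v = objQ A a x}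

/-- The Lagrangian of eTRS. -/
noncomputable def lagr {n : ℕ} (A : Matrix (Fin n) (Fin n) ℝ) (a b : Fin n → ℝ)
    (c Δ : ℝ) (x : Fin n → ℝ) (l1 l2 : ℝ) : ℝ :=
  objQ A a x + l1 * (x ⬝ᵥ x - Δ) + l2 * (b ⬝ᵥ x - c)

/-- The Lagrangian dual value d* of eTRS:
the supremum over λ1, λ2 ≥ 0 of inf_x of the Lagrangian, encoded as the supremum of all
values that are lower bounds of the Lagrangian for some admissible multipliers. -/
noncomputable def dstar {n : ℕ} (A : Matrix (Fin n) (Fin n) ℝ) (a b : Fin n → ℝ)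
    (c Δ : ℝ) : ℝ :=
  sSup {v : ℝ | ∃ l1 l2 : ℝ, 0 ≤ l1 ∧ 0 ≤ l2 ∧ ∀ x : Fin n → ℝ, v ≤ lagr A a b c Δ x l1 l2}

/-- x is a global optimal solution of eTRS. -/
def isOptimal {n : ℕ} (A : Matrix (Fin n) (Fin n) ℝ) (a b : Fin n → ℝ)
    (c Δ : ℝ) (x : Fin n → ℝ) : Prop :=
  x ⬝ᵥ x ≤ Δ ∧ b ⬝ᵥ x ≤ c ∧
    ∀ y : Fin n → ℝ, y ⬝ᵥ y ≤ Δ → b ⬝ᵥ y ≤ c → objQ A a x ≤ objQ A a y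

/-- The dual objective k(t,λ) = (Δ+1)·λmin(D(t,λ)) - t - λc. -/
noncomputable def ktl {n : ℕ} (A : Matrix (Fin n) (Fin n) ℝ) (a b : Fin n → ℝ)
    (c Δ : ℝ) (t l : ℝ) : ℝ :=
  (Δ + 1) * lambdaMin (borderD2 A a b t l) - t - l * c

/-!
Perturbing `(t, λ)` away from the maximiser of `k` gives first-order conditions, provided
`λmin (D (t, λ))` is differentiable there. This is where `λmin (D) < λmin (A)` enters: on vectors
with vanishing head `D` acts as `A`, so `y₀ ≠ 0`, and moreover `D ≥ λmin (A)` on `y⊥`. With this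
spectral gap, `λmin (D (t + s, λ))` and `λmin (D (t, λ + s))` are bounded below by their tangent
lines at `s = 0` (slopes `y₀²` and `y₀ (bᵀz)`) minus `C s²`. Stationarity in `t` gives
`(Δ + 1) y₀² = 1`, i.e. `‖x*‖² = Δ`; the one-sided condition at `λ* ≥ 0` gives `bᵀx* ≤ c` with
complementary slackness. Finally the Lagrangian with multipliers `(-λmin (D), λ*)` equals
`(1, x)ᵀ (D - λmin (D)) (1, x) + k (t*, λ*)`, which is minimal at `x*` because `(1, x*)` is
proportional to `y`; `x*` is thus a saddle point, giving optimality and `p* = d*`.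
-/

section DotProduct

variable {ι : Type} [Fintype ι]

lemma dotProduct_self_nonneg (v : ι → ℝ) : 0 ≤ v ⬝ᵥ v :=
  Finset.sum_nonneg fun i _ => mul_self_nonneg (v i)

lemma dotProduct_self_pos {v : ι → ℝ} (hv : v ≠ 0) : 0 < v ⬝ᵥ v :=
  (dotProduct_self_nonneg v).lt_of_ne (Ne.symm (dotProduct_self_eq_zero.not.2 hv))

lemma abs_apply_le_sqrt_dotProduct_self (v : ι → ℝ) (i : ι) : |v i| ≤ √(v ⬝ᵥ v) :=
  Real.abs_le_sqrt <| by
    simpa [dotProduct, sq] using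
      Finset.single_le_sum (fun j _ => mul_self_nonneg (v j)) (Finset.mem_univ i)

lemma abs_dotProduct_le (v w : ι → ℝ) : |v ⬝ᵥ w| ≤ √(v ⬝ᵥ v) * √(w ⬝ᵥ w) := by
  rw [← Real.sqrt_mul (dotProduct_self_nonneg v)]
  exact Real.abs_le_sqrt <| by
    simpa [dotProduct, sq] using Finset.sum_mul_sq_le_sq_mul_sq Finset.univ v w

lemma abs_apply_mul_dotProduct_le (v w e : ι → ℝ) (i : ι) :
    |v i * (e ⬝ᵥ w)| ≤ √(e ⬝ᵥ e) * (√(v ⬝ᵥ v) * √(w ⬝ᵥ w)) := by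
  rw [abs_mul, mul_left_comm]
  exact mul_le_mul (abs_apply_le_sqrt_dotProduct_self v i) (abs_dotProduct_le e w)
    (abs_nonneg _) (Real.sqrt_nonneg _)

lemma sq_dotProduct_le_one {u y : ι → ℝ} (hu : u ⬝ᵥ u = 1) (hy : y ⬝ᵥ y = 1) :
    (u ⬝ᵥ y) ^ 2 ≤ 1 := by
  have := abs_dotProduct_le u y
  rw [hu, hy, Real.sqrt_one, one_mul] at this
  exact sq_le_one_iff_abs_le_one _ |>.2 this

lemma Matrix.IsHermitian.dotProduct_mulVec_comm {M : Matrix ι ι ℝ} (hM : M.IsHermitian)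
    (v w : ι → ℝ) : v ⬝ᵥ M *ᵥ w = M *ᵥ v ⬝ᵥ w := by
  rw [Matrix.dotProduct_mulVec, ← Matrix.mulVec_transpose,
    ← Matrix.conjTranspose_eq_transpose_of_trivial, hM.eq]

lemma abs_apply_mul_dotProduct_sub_le {u y : ι → ℝ} (hu : u ⬝ᵥ u = 1) (hy : y ⬝ᵥ y = 1)
    (e : ι → ℝ) (i : ι) :
    |u i * (e ⬝ᵥ u) - y i * (e ⬝ᵥ y)| ≤ 3 * √(e ⬝ᵥ e) * √(1 - (u ⬝ᵥ y) ^ 2) := by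
  set α := u ⬝ᵥ y
  set w := u - α • y
  have hyu : y ⬝ᵥ u = α := dotProduct_comm y u
  have hww : w ⬝ᵥ w = 1 - α ^ 2 := by
    simp only [w, sub_dotProduct, dotProduct_sub, smul_dotProduct, dotProduct_smul, smul_eq_mul,
      hu, hy, hyu]
    ring
  have hα : |α| ≤ 1 := (sq_le_one_iff_abs_le_one α).1 (sq_dotProduct_le_one hu hy)
  set ε := √(1 - α ^ 2)
  have hε : ε ^ 2 = 1 - α ^ 2 := Real.sq_sqrt (by rw [← hww]; exact dotProduct_self_nonneg w)
  have hε1 : ε ≤ 1 := Real.sqrt_le_one.2 (by nlinarith)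
  have hεnn : 0 ≤ ε := Real.sqrt_nonneg _
  have h1 : |w i * (e ⬝ᵥ u)| ≤ √(e ⬝ᵥ e) * ε := by
    simpa [hww, hu] using abs_apply_mul_dotProduct_le w u e i
  have h2 : |y i * (e ⬝ᵥ w)| ≤ √(e ⬝ᵥ e) * ε := by
    simpa [hww, hy] using abs_apply_mul_dotProduct_le y w e i
  have h3 : |y i * (e ⬝ᵥ y)| ≤ √(e ⬝ᵥ e) := by
    simpa [hy] using abs_apply_mul_dotProduct_le y y e i
  have hsplit : u i * (e ⬝ᵥ u) - y i * (e ⬝ᵥ y)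
      = w i * (e ⬝ᵥ u) + α * (y i * (e ⬝ᵥ w)) + (α ^ 2 - 1) * (y i * (e ⬝ᵥ y)) := by
    simp only [w, Pi.sub_apply, Pi.smul_apply, smul_eq_mul, dotProduct_sub, dotProduct_smul]
    ring
  have hα2 : |α ^ 2 - 1| = ε ^ 2 := by rw [abs_sub_comm, hε, abs_of_nonneg (by nlinarith)]
  rw [hsplit]
  calc _ ≤ |w i * (e ⬝ᵥ u)| + |α| * |y i * (e ⬝ᵥ w)| + ε ^ 2 * |y i * (e ⬝ᵥ y)| := by
        rw [← hα2, ← abs_mul, ← abs_mul]; exact abs_add_three _ _ _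
    _ ≤ √(e ⬝ᵥ e) * ε + 1 * (√(e ⬝ᵥ e) * ε) + ε ^ 2 * √(e ⬝ᵥ e) := by
        gcongr
    _ ≤ 3 * √(e ⬝ᵥ e) * ε := by nlinarith [mul_nonneg (Real.sqrt_nonneg (e ⬝ᵥ e)) hεnn]

end DotProduct

section LambdaMin

variable {ι : Type} [Fintype ι] {M : Matrix ι ι ℝ}

lemma setOf_hasEigenvector_eq_spectrum [DecidableEq ι] (M : Matrix ι ι ℝ) :
    {μ : ℝ | ∃ v : ι → ℝ, v ≠ 0 ∧ M *ᵥ v = μ • v} = spectrum ℝ M := by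
  ext μ
  rw [Set.mem_ofPred_eq, ← Matrix.spectrum_toLin', ← Module.End.hasEigenvalue_iff_mem_spectrum]
  refine ⟨fun ⟨v, hv, h⟩ => Module.End.hasEigenvalue_of_hasEigenvector ⟨?_, hv⟩, fun h => ?_⟩
  · simpa [Module.End.mem_eigenspace_iff] using h
  · obtain ⟨v, hv⟩ := h.exists_hasEigenvector
    exact ⟨v, hv.2, by simpa using hv.apply_eq_smul⟩

lemma lambdaMin_eq_sInf_spectrum [DecidableEq ι] (M : Matrix ι ι ℝ) :
    lambdaMin M = sInf (spectrum ℝ M) := by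
  rw [lambdaMin, setOf_hasEigenvector_eq_spectrum]

lemma lambdaMin_le_of_mem_spectrum [DecidableEq ι] {μ : ℝ} (hμ : μ ∈ spectrum ℝ M) :
    lambdaMin M ≤ μ := by
  rw [lambdaMin_eq_sInf_spectrum]
  exact csInf_le Matrix.finite_real_spectrum.bddBelow hμ

lemma Matrix.IsHermitian.lambdaMin_mem_spectrum [DecidableEq ι] [Nonempty ι]
    (hM : M.IsHermitian) : lambdaMin M ∈ spectrum ℝ M := by
  rw [lambdaMin_eq_sInf_spectrum]
  exact Set.Nonempty.csInf_mem ⟨_, hM.eigenvalues_mem_spectrum_real (Classical.arbitrary ι)⟩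
    Matrix.finite_real_spectrum

lemma Matrix.IsHermitian.lambdaMin_mul_dotProduct_self_le (hM : M.IsHermitian) (v : ι → ℝ) :
    lambdaMin M * (v ⬝ᵥ v) ≤ v ⬝ᵥ M *ᵥ v := by
  classical
  have hpsd : (M - algebraMap ℝ _ (lambdaMin M)).PosSemidef := by
    refine Matrix.posSemidef_iff_isHermitian_and_spectrum_nonneg.2
      ⟨hM.sub (Matrix.isHermitian_diagonal _), ?_⟩
    rw [← spectrum.sub_singleton_eq]
    rintro _ ⟨μ, hμ, _, rfl, rfl⟩
    exact sub_nonneg.2 (lambdaMin_le_of_mem_spectrum hμ)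
  have := hpsd.dotProduct_mulVec_nonneg v
  simpa [Algebra.algebraMap_eq_smul_one, Matrix.sub_mulVec, Matrix.smul_mulVec,
    dotProduct_sub] using this

lemma Matrix.IsHermitian.exists_unit_mulVec_eq_lambdaMin_smul [Nonempty ι]
    (hM : M.IsHermitian) : ∃ u : ι → ℝ, u ⬝ᵥ u = 1 ∧ M *ᵥ u = lambdaMin M • u := by
  classical
  obtain ⟨v, hv, hMv⟩ : lambdaMin M ∈ {μ : ℝ | ∃ v : ι → ℝ, v ≠ 0 ∧ M *ᵥ v = μ • v} := by
    rw [setOf_hasEigenvector_eq_spectrum]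
    exact hM.lambdaMin_mem_spectrum
  have hpos : 0 < v ⬝ᵥ v := dotProduct_self_pos hv
  refine ⟨(√(v ⬝ᵥ v))⁻¹ • v, ?_, by rw [Matrix.mulVec_smul, hMv, smul_comm]⟩
  rw [smul_dotProduct, dotProduct_smul, smul_eq_mul, smul_eq_mul, ← mul_assoc, ← sq,
    inv_pow, Real.sq_sqrt hpos.le, inv_mul_cancel₀ hpos.ne']

lemma Matrix.IsHermitian.lambdaMin_nonpos_of_not_posDef (hM : M.IsHermitian) (h : ¬M.PosDef) :
    lambdaMin M ≤ 0 := by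
  refine not_lt.1 fun hpos => h (Matrix.PosDef.of_dotProduct_mulVec_pos hM fun v hv => ?_)
  have hv' : 0 < v ⬝ᵥ v := dotProduct_self_pos hv
  simpa using (mul_pos hpos hv').trans_le (hM.lambdaMin_mul_dotProduct_self_le v)

end LambdaMin

section Calculus

lemma mul_sub_mul_sq_le_sq_div {g : ℝ} (hg : 0 < g) (K ε : ℝ) :
    K * ε - g * ε ^ 2 ≤ K ^ 2 / (4 * g) := by
  rw [le_div_iff₀ (by positivity)]
  nlinarith [sq_nonneg (K - 2 * g * ε)]

open Filter Topology in
lemma nonpos_of_forall_mul_le_mul_sq {d C δ : ℝ} (hδ : 0 < δ)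
    (h : ∀ s, 0 < s → s < δ → s * d ≤ C * s ^ 2) : d ≤ 0 := by
  have hlim : Tendsto (fun s => C * s) (𝓝[>] 0) (𝓝 0) :=
    tendsto_nhdsWithin_of_tendsto_nhds ((continuous_const_mul C).tendsto' 0 0 (mul_zero C))
  refine ge_of_tendsto hlim ?_
  filter_upwards [Ioo_mem_nhdsGT hδ] with s ⟨hs, hsδ⟩
  exact le_of_mul_le_mul_left (by nlinarith [h s hs hsδ]) hs

lemma eq_zero_of_forall_mul_le_mul_sq {d C : ℝ} (h : ∀ s, s * d ≤ C * s ^ 2) : d = 0 := by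
  refine le_antisymm (nonpos_of_forall_mul_le_mul_sq one_pos fun s _ _ => h s) ?_
  refine neg_nonpos.1 (nonpos_of_forall_mul_le_mul_sq (C := C) one_pos fun s _ _ => ?_)
  simpa using h (-s)

lemma nonpos_and_mul_eq_zero_of_forall_mul_le_mul_sq {d C l : ℝ} (hl : 0 ≤ l)
    (h : ∀ s, 0 ≤ l + s → s * d ≤ C * s ^ 2) : d ≤ 0 ∧ l * d = 0 := by
  have hd : d ≤ 0 := nonpos_of_forall_mul_le_mul_sq one_pos fun s hs _ => h s (by linarith)
  refine ⟨hd, ?_⟩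
  rcases hl.eq_or_lt with rfl | hl
  · exact zero_mul d
  have : -d ≤ 0 := nonpos_of_forall_mul_le_mul_sq hl fun s _ hsl => by
    simpa using h (-s) (by linarith)
  rw [le_antisymm hd (by linarith), mul_zero]

end Calculus

section SpectralGap

variable {ι : Type} [Fintype ι] {D : Matrix ι ι ℝ} {y : ι → ℝ} {μ ν : ℝ} {i₀ : ι}

lemma eigenvector_apply_ne_zero (hy1 : y ⬝ᵥ y = 1) (hy : D *ᵥ y = μ • y)
    (hres : ∀ v : ι → ℝ, v i₀ = 0 → ν * (v ⬝ᵥ v) ≤ v ⬝ᵥ D *ᵥ v) (hμν : μ < ν) : y i₀ ≠ 0 := by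
  intro h
  have := hres y h
  rw [hy, dotProduct_smul, smul_eq_mul, hy1] at this
  linarith

lemma sub_le_dotProduct_mulVec_of_eigenvector (hD : D.IsHermitian) (hy1 : y ⬝ᵥ y = 1)
    (hy : D *ᵥ y = μ • y) (hres : ∀ v : ι → ℝ, v i₀ = 0 → ν * (v ⬝ᵥ v) ≤ v ⬝ᵥ D *ᵥ v)
    (hμν : μ ≤ ν) (hy₀ : y i₀ ≠ 0) (u : ι → ℝ) :
    ν * (u ⬝ᵥ u) - (ν - μ) * (u ⬝ᵥ y) ^ 2 ≤ u ⬝ᵥ D *ᵥ u := by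
  set α := u ⬝ᵥ y
  have hyu : y ⬝ᵥ u = α := dotProduct_comm y u
  have hyDu : y ⬝ᵥ D *ᵥ u = μ * α := by
    rw [hD.dotProduct_mulVec_comm, hy, smul_dotProduct, hyu, smul_eq_mul]
  have huDy : u ⬝ᵥ D *ᵥ y = μ * α := by rw [hy, dotProduct_smul, smul_eq_mul]
  have hyDy : y ⬝ᵥ D *ᵥ y = μ := by rw [hy, dotProduct_smul, smul_eq_mul, hy1, mul_one]
  -- project `u` along `y` onto the hyperplane `v i₀ = 0`, where `D ≥ ν`
  have key := hres (u i₀ • y - y i₀ • u) (by simp; ring)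
  simp only [Matrix.mulVec_sub, Matrix.mulVec_smul, sub_dotProduct, dotProduct_sub,
    smul_dotProduct, dotProduct_smul, smul_eq_mul, hy1, hyu, hyDu, huDy, hyDy,
    show u ⬝ᵥ y = α from rfl] at key
  have hy₀2 : 0 < y i₀ ^ 2 := by positivity
  refine le_of_mul_le_mul_left ?_ hy₀2
  nlinarith [mul_nonneg (sub_nonneg.2 hμν) (sq_nonneg (u i₀ - y i₀ * α))]

lemma sub_le_lambdaMin_of_dotProduct_mulVec_eq [Nonempty ι] (hD : D.IsHermitian)
    (hy1 : y ⬝ᵥ y = 1) (hy : D *ᵥ y = μ • y)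
    (hres : ∀ v : ι → ℝ, v i₀ = 0 → ν * (v ⬝ᵥ v) ≤ v ⬝ᵥ D *ᵥ v) (hμν : μ < ν)
    {P : Matrix ι ι ℝ} (hP : P.IsHermitian) (e : ι → ℝ) (s : ℝ)
    (hPD : ∀ v, v ⬝ᵥ P *ᵥ v = v ⬝ᵥ D *ᵥ v + s * (v i₀ * (e ⬝ᵥ v))) :
    μ + s * (y i₀ * (e ⬝ᵥ y)) - 9 * (e ⬝ᵥ e) / (4 * (ν - μ)) * s ^ 2 ≤ lambdaMin P := by
  obtain ⟨u, hu1, hu⟩ := hP.exists_unit_mulVec_eq_lambdaMin_smul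
  have hP_u : lambdaMin P = u ⬝ᵥ D *ᵥ u + s * (u i₀ * (e ⬝ᵥ u)) := by
    rw [← hPD, hu, dotProduct_smul, hu1, smul_eq_mul, mul_one]
  have hD_u := sub_le_dotProduct_mulVec_of_eigenvector hD hy1 hy hres hμν.le
    (eigenvector_apply_ne_zero hy1 hy hres hμν) u
  set ε := √(1 - (u ⬝ᵥ y) ^ 2)
  have hε : ε ^ 2 = 1 - (u ⬝ᵥ y) ^ 2 :=
    Real.sq_sqrt (sub_nonneg.2 (sq_dotProduct_le_one hu1 hy1))
  have hq : s * (y i₀ * (e ⬝ᵥ y)) - |s| * (3 * √(e ⬝ᵥ e) * ε) ≤ s * (u i₀ * (e ⬝ᵥ u)) := by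
    have := mul_le_mul_of_nonneg_left (abs_apply_mul_dotProduct_sub_le hu1 hy1 e i₀)
      (abs_nonneg s)
    rw [← abs_mul] at this
    linarith [neg_abs_le (s * (u i₀ * (e ⬝ᵥ u) - y i₀ * (e ⬝ᵥ y)))]
  have hK : (|s| * (3 * √(e ⬝ᵥ e))) ^ 2 = 9 * (e ⬝ᵥ e) * s ^ 2 := by
    rw [mul_pow, mul_pow, sq_abs, Real.sq_sqrt (dotProduct_self_nonneg e)]; ring
  -- the gap term `(ν - μ) ε²` absorbs the first-order error `3 |s| ‖e‖ ε`
  have := mul_sub_mul_sq_le_sq_div (sub_pos.2 hμν) (|s| * (3 * √(e ⬝ᵥ e))) ε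
  rw [hK, mul_div_right_comm] at this
  rw [hu1] at hD_u
  nlinarith

end SpectralGap

section Bordered

variable {n : ℕ} {A : Matrix (Fin n) (Fin n) ℝ}

lemma dotProduct_unit_sum {κ : Type} [Fintype κ] (v w : Unit ⊕ κ → ℝ) :
    v ⬝ᵥ w = v (Sum.inl ()) * w (Sum.inl ()) + v ∘ Sum.inr ⬝ᵥ w ∘ Sum.inr := by
  simp [dotProduct, Fintype.sum_sum_type]

lemma sum_elim_zero_dotProduct {κ : Type} [Fintype κ] (b : κ → ℝ) (v : Unit ⊕ κ → ℝ) :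
    (Sum.elim 0 b : Unit ⊕ κ → ℝ) ⬝ᵥ v = b ⬝ᵥ v ∘ Sum.inr := by
  simp [dotProduct_unit_sum]

lemma borderD_mulVec (A : Matrix (Fin n) (Fin n) ℝ) (a : Fin n → ℝ) (t : ℝ)
    (v : Unit ⊕ Fin n → ℝ) :
    borderD A a t *ᵥ v = Sum.elim (fun _ => t * v (Sum.inl ()) - a ⬝ᵥ v ∘ Sum.inr)
      (A *ᵥ (v ∘ Sum.inr) - v (Sum.inl ()) • a) := by
  ext (_ | i) <;> simp [borderD, Matrix.mulVec, dotProduct] <;> ring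

lemma dotProduct_borderD_mulVec (A : Matrix (Fin n) (Fin n) ℝ) (a : Fin n → ℝ) (t : ℝ)
    (v : Unit ⊕ Fin n → ℝ) :
    v ⬝ᵥ borderD A a t *ᵥ v = t * v (Sum.inl ()) ^ 2 - 2 * v (Sum.inl ()) * (a ⬝ᵥ v ∘ Sum.inr)
      + v ∘ Sum.inr ⬝ᵥ A *ᵥ (v ∘ Sum.inr) := by
  rw [dotProduct_unit_sum, borderD_mulVec]
  simp only [Sum.elim_inl, Sum.elim_comp_inr, dotProduct_sub, dotProduct_smul, smul_eq_mul,
    dotProduct_comm (v ∘ Sum.inr) a]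
  ring

lemma borderD_isHermitian (hA : A.IsHermitian) (a : Fin n → ℝ) (t : ℝ) :
    (borderD A a t).IsHermitian :=
  Matrix.IsHermitian.fromBlocks (by ext; simp) (by ext; simp) hA

lemma borderD2_isHermitian (hA : A.IsHermitian) (a b : Fin n → ℝ) (t l : ℝ) :
    (borderD2 A a b t l).IsHermitian :=
  borderD_isHermitian hA _ t

lemma lambdaMin_mul_le_dotProduct_borderD_mulVec (hA : A.IsHermitian) (a : Fin n → ℝ) (t : ℝ)
    {v : Unit ⊕ Fin n → ℝ} (hv : v (Sum.inl ()) = 0) :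
    lambdaMin A * (v ⬝ᵥ v) ≤ v ⬝ᵥ borderD A a t *ᵥ v := by
  rw [dotProduct_borderD_mulVec, dotProduct_unit_sum, hv]
  simpa using hA.lambdaMin_mul_dotProduct_self_le (v ∘ Sum.inr)

lemma dotProduct_borderD2_add_left_mulVec (A : Matrix (Fin n) (Fin n) ℝ) (a b : Fin n → ℝ)
    (t l s : ℝ) (v : Unit ⊕ Fin n → ℝ) :
    v ⬝ᵥ borderD2 A a b (t + s) l *ᵥ v = v ⬝ᵥ borderD2 A a b t l *ᵥ v
      + s * (v (Sum.inl ()) * (Pi.single (Sum.inl ()) 1 ⬝ᵥ v)) := by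
  simp only [borderD2, dotProduct_borderD_mulVec, single_one_dotProduct]
  ring

lemma dotProduct_borderD2_add_right_mulVec (A : Matrix (Fin n) (Fin n) ℝ) (a b : Fin n → ℝ)
    (t l s : ℝ) (v : Unit ⊕ Fin n → ℝ) :
    v ⬝ᵥ borderD2 A a b t (l + s) *ᵥ v = v ⬝ᵥ borderD2 A a b t l *ᵥ v
      + s * (v (Sum.inl ()) * (Sum.elim 0 b ⬝ᵥ v)) := by
  have h (l : ℝ) : (fun j => a j - l / 2 * b j) ⬝ᵥ v ∘ Sum.inr
      = a ⬝ᵥ v ∘ Sum.inr - l / 2 * (b ⬝ᵥ v ∘ Sum.inr) := by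
    rw [show (fun j => a j - l / 2 * b j) = a - (l / 2) • b from rfl, sub_dotProduct,
      smul_dotProduct, smul_eq_mul]
  simp only [borderD2, dotProduct_borderD_mulVec, sum_elim_zero_dotProduct, h]
  ring

end Bordered

section Duality

def homogenize {κ : Type} (x : κ → ℝ) : Unit ⊕ κ → ℝ := Sum.elim 1 x

@[simp] lemma homogenize_inl {κ : Type} (x : κ → ℝ) (u : Unit) : homogenize x (Sum.inl u) = 1 :=
  rfl

@[simp] lemma homogenize_inr {κ : Type} (x : κ → ℝ) (i : κ) : homogenize x (Sum.inr i) = x i :=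
  rfl

@[simp] lemma homogenize_comp_inr {κ : Type} (x : κ → ℝ) : homogenize x ∘ Sum.inr = x :=
  rfl

lemma homogenize_div_eq_inv_smul {κ : Type} {y : Unit ⊕ κ → ℝ} (hy₀ : y (Sum.inl ()) ≠ 0) :
    homogenize (fun i => y (Sum.inr i) / y (Sum.inl ())) = (y (Sum.inl ()))⁻¹ • y := by
  ext (_ | i) <;> simp [div_eq_inv_mul, hy₀]

variable {n : ℕ} {A : Matrix (Fin n) (Fin n) ℝ} {a b : Fin n → ℝ} {c Δ : ℝ}

lemma lagr_le_objQ {x : Fin n → ℝ} {l1 l2 : ℝ} (hl1 : 0 ≤ l1) (hl2 : 0 ≤ l2)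
    (hx : x ⬝ᵥ x ≤ Δ) (hbx : b ⬝ᵥ x ≤ c) : lagr A a b c Δ x l1 l2 ≤ objQ A a x := by
  rw [lagr]
  nlinarith [mul_nonneg hl1 (sub_nonneg.2 hx), mul_nonneg hl2 (sub_nonneg.2 hbx)]

variable {x : Fin n → ℝ} {l1 l2 : ℝ}

lemma isOptimal_of_saddle (hl1 : 0 ≤ l1) (hl2 : 0 ≤ l2) (hx : x ⬝ᵥ x ≤ Δ) (hbx : b ⬝ᵥ x ≤ c)
    (hcs : lagr A a b c Δ x l1 l2 = objQ A a x)
    (hmin : ∀ x', lagr A a b c Δ x l1 l2 ≤ lagr A a b c Δ x' l1 l2) :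
    isOptimal A a b c Δ x :=
  ⟨hx, hbx, fun x' hx' hbx' => hcs ▸ (hmin x').trans (lagr_le_objQ hl1 hl2 hx' hbx')⟩

lemma pstar_eq_objQ (hx : isOptimal A a b c Δ x) : pstar A a b c Δ = objQ A a x :=
  IsLeast.csInf_eq ⟨⟨x, hx.1, hx.2.1, rfl⟩, by
    rintro _ ⟨x', hx', hbx', rfl⟩
    exact hx.2.2 x' hx' hbx'⟩

lemma dstar_eq_objQ (hl1 : 0 ≤ l1) (hl2 : 0 ≤ l2) (hx : x ⬝ᵥ x ≤ Δ) (hbx : b ⬝ᵥ x ≤ c)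
    (hcs : lagr A a b c Δ x l1 l2 = objQ A a x)
    (hmin : ∀ x', lagr A a b c Δ x l1 l2 ≤ lagr A a b c Δ x' l1 l2) :
    dstar A a b c Δ = objQ A a x :=
  IsGreatest.csSup_eq ⟨⟨l1, l2, hl1, hl2, fun x' => hcs ▸ hmin x'⟩, by
    rintro v ⟨m1, m2, hm1, hm2, hv⟩
    exact (hv x).trans (lagr_le_objQ hm1 hm2 hx hbx)⟩

lemma pstar_eq_dstar_and_isOptimal_of_saddle (hl1 : 0 ≤ l1) (hl2 : 0 ≤ l2) (hx : x ⬝ᵥ x ≤ Δ)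
    (hbx : b ⬝ᵥ x ≤ c) (hcs : lagr A a b c Δ x l1 l2 = objQ A a x)
    (hmin : ∀ x', lagr A a b c Δ x l1 l2 ≤ lagr A a b c Δ x' l1 l2) :
    pstar A a b c Δ = dstar A a b c Δ ∧ isOptimal A a b c Δ x :=
  have hopt := isOptimal_of_saddle hl1 hl2 hx hbx hcs hmin
  ⟨(pstar_eq_objQ hopt).trans (dstar_eq_objQ hl1 hl2 hx hbx hcs hmin).symm, hopt⟩

lemma lagr_eq_dotProduct_borderD2_mulVec (x : Fin n → ℝ) (l1 l2 t : ℝ) :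
    lagr A a b c Δ x l1 l2 = homogenize x ⬝ᵥ borderD2 A a b t l2 *ᵥ homogenize x
      + l1 * (homogenize x ⬝ᵥ homogenize x) - (t + l1 * (Δ + 1) + l2 * c) := by
  rw [borderD2, dotProduct_borderD_mulVec, dotProduct_unit_sum,
    show (fun j => a j - l2 / 2 * b j) = a - (l2 / 2) • b from rfl]
  simp only [homogenize_inl, homogenize_comp_inr, sub_dotProduct, smul_dotProduct,
    smul_eq_mul, lagr, objQ]
  ring

lemma lagr_le_lagr_of_mulVec_eq (hA : A.IsHermitian) {t : ℝ}
    (hx : borderD2 A a b t l2 *ᵥ homogenize x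
      = lambdaMin (borderD2 A a b t l2) • homogenize x) (x' : Fin n → ℝ) :
    lagr A a b c Δ x (-lambdaMin (borderD2 A a b t l2)) l2
      ≤ lagr A a b c Δ x' (-lambdaMin (borderD2 A a b t l2)) l2 := by
  rw [lagr_eq_dotProduct_borderD2_mulVec (t := t), lagr_eq_dotProduct_borderD2_mulVec (t := t), hx,
    dotProduct_smul, smul_eq_mul]
  linarith [(borderD2_isHermitian hA a b t l2).lambdaMin_mul_dotProduct_self_le (homogenize x')]

end Duality

section FirstOrder

variable {n : ℕ} {A : Matrix (Fin n) (Fin n) ℝ} {a b : Fin n → ℝ} {c Δ t l : ℝ}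
  {y : Unit ⊕ Fin n → ℝ}

lemma sub_le_lambdaMin_of_dotProduct_borderD2_mulVec_eq (hA : A.IsHermitian)
    (hlt : lambdaMin (borderD2 A a b t l) < lambdaMin A) (hy1 : y ⬝ᵥ y = 1)
    (hy : borderD2 A a b t l *ᵥ y = lambdaMin (borderD2 A a b t l) • y)
    {P : Matrix (Unit ⊕ Fin n) (Unit ⊕ Fin n) ℝ} (hP : P.IsHermitian) (e : Unit ⊕ Fin n → ℝ)
    (s : ℝ) (hPD : ∀ v, v ⬝ᵥ P *ᵥ v
      = v ⬝ᵥ borderD2 A a b t l *ᵥ v + s * (v (Sum.inl ()) * (e ⬝ᵥ v))) :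
    lambdaMin (borderD2 A a b t l) + s * (y (Sum.inl ()) * (e ⬝ᵥ y))
      - 9 * (e ⬝ᵥ e) / (4 * (lambdaMin A - lambdaMin (borderD2 A a b t l))) * s ^ 2
      ≤ lambdaMin P :=
  sub_le_lambdaMin_of_dotProduct_mulVec_eq (borderD2_isHermitian hA a b t l) hy1 hy
    (fun _ hv => lambdaMin_mul_le_dotProduct_borderD_mulVec hA _ t hv) hlt hP e s hPD

lemma exists_forall_sub_le_lambdaMin_borderD2_add_left (hA : A.IsHermitian)
    (hlt : lambdaMin (borderD2 A a b t l) < lambdaMin A) (hy1 : y ⬝ᵥ y = 1)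
    (hy : borderD2 A a b t l *ᵥ y = lambdaMin (borderD2 A a b t l) • y) :
    ∃ C, ∀ s, lambdaMin (borderD2 A a b t l) + s * y (Sum.inl ()) ^ 2 - C * s ^ 2
      ≤ lambdaMin (borderD2 A a b (t + s) l) :=
  ⟨_, fun s => by
    simpa [sq] using sub_le_lambdaMin_of_dotProduct_borderD2_mulVec_eq hA hlt hy1 hy
      (borderD2_isHermitian hA a b (t + s) l) _ s (dotProduct_borderD2_add_left_mulVec A a b t l s)⟩

lemma exists_forall_sub_le_lambdaMin_borderD2_add_right (hA : A.IsHermitian)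
    (hlt : lambdaMin (borderD2 A a b t l) < lambdaMin A) (hy1 : y ⬝ᵥ y = 1)
    (hy : borderD2 A a b t l *ᵥ y = lambdaMin (borderD2 A a b t l) • y) :
    ∃ C, ∀ s, lambdaMin (borderD2 A a b t l) + s * (y (Sum.inl ()) * (b ⬝ᵥ y ∘ Sum.inr))
      - C * s ^ 2 ≤ lambdaMin (borderD2 A a b t (l + s)) :=
  ⟨_, fun s => by
    simpa [sum_elim_zero_dotProduct] using sub_le_lambdaMin_of_dotProduct_borderD2_mulVec_eq hA
      hlt hy1 hy (borderD2_isHermitian hA a b t (l + s)) _ s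
      (dotProduct_borderD2_add_right_mulVec A a b t l s)⟩

lemma mul_sq_eq_one_of_isMax_ktl (hA : A.IsHermitian) (hΔ : 0 < Δ) (hl : 0 ≤ l)
    (hmax : ∀ t' l' : ℝ, 0 ≤ l' → ktl A a b c Δ t' l' ≤ ktl A a b c Δ t l)
    (hlt : lambdaMin (borderD2 A a b t l) < lambdaMin A) (hy1 : y ⬝ᵥ y = 1)
    (hy : borderD2 A a b t l *ᵥ y = lambdaMin (borderD2 A a b t l) • y) :
    (Δ + 1) * y (Sum.inl ()) ^ 2 = 1 := by
  obtain ⟨C, hC⟩ := exists_forall_sub_le_lambdaMin_borderD2_add_left hA hlt hy1 hy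
  refine sub_eq_zero.1 (eq_zero_of_forall_mul_le_mul_sq (C := (Δ + 1) * C) fun s => ?_)
  have hk := hmax (t + s) l hl
  simp only [ktl] at hk
  nlinarith [mul_le_mul_of_nonneg_left (hC s) (by linarith : 0 ≤ Δ + 1)]

lemma le_and_mul_eq_zero_of_isMax_ktl (hA : A.IsHermitian) (hΔ : 0 < Δ) (hl : 0 ≤ l)
    (hmax : ∀ t' l' : ℝ, 0 ≤ l' → ktl A a b c Δ t' l' ≤ ktl A a b c Δ t l)
    (hlt : lambdaMin (borderD2 A a b t l) < lambdaMin A) (hy1 : y ⬝ᵥ y = 1)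
    (hy : borderD2 A a b t l *ᵥ y = lambdaMin (borderD2 A a b t l) • y) :
    (Δ + 1) * (y (Sum.inl ()) * (b ⬝ᵥ y ∘ Sum.inr)) ≤ c
      ∧ l * ((Δ + 1) * (y (Sum.inl ()) * (b ⬝ᵥ y ∘ Sum.inr)) - c) = 0 := by
  obtain ⟨C, hC⟩ := exists_forall_sub_le_lambdaMin_borderD2_add_right hA hlt hy1 hy
  obtain ⟨hle, hcs⟩ := nonpos_and_mul_eq_zero_of_forall_mul_le_mul_sq
    (d := (Δ + 1) * (y (Sum.inl ()) * (b ⬝ᵥ y ∘ Sum.inr)) - c) (C := (Δ + 1) * C) hl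
    fun s hs => by
      have hk := hmax t (l + s) hs
      simp only [ktl] at hk
      nlinarith [mul_le_mul_of_nonneg_left (hC s) (by linarith : 0 ≤ Δ + 1)]
  exact ⟨sub_nonpos.1 hle, hcs⟩

end FirstOrder

section Dehomogenize

variable {κ : Type} [Fintype κ] {y : Unit ⊕ κ → ℝ}

lemma div_dotProduct_div_eq {Δ : ℝ} (hy1 : y ⬝ᵥ y = 1) (ht : (Δ + 1) * y (Sum.inl ()) ^ 2 = 1) :
    (fun i => y (Sum.inr i) / y (Sum.inl ())) ⬝ᵥ (fun i => y (Sum.inr i) / y (Sum.inl ())) = Δ := by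
  have hy₀ : y (Sum.inl ()) ≠ 0 := by rintro h; simp [h] at ht
  have h := congrArg (fun v => v ⬝ᵥ v) (homogenize_div_eq_inv_smul hy₀)
  simp only [dotProduct_unit_sum (homogenize _), homogenize_inl, homogenize_comp_inr,
    smul_dotProduct, dotProduct_smul, smul_eq_mul, hy1] at h
  field_simp at h
  exact mul_left_cancel₀ (pow_ne_zero 2 hy₀) (by linear_combination h - ht)

lemma dotProduct_div_eq {Δ : ℝ} (ht : (Δ + 1) * y (Sum.inl ()) ^ 2 = 1) (b : κ → ℝ) :
    b ⬝ᵥ (fun i => y (Sum.inr i) / y (Sum.inl ()))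
      = (Δ + 1) * (y (Sum.inl ()) * (b ⬝ᵥ y ∘ Sum.inr)) := by
  have hinv : (y (Sum.inl ()))⁻¹ = (Δ + 1) * y (Sum.inl ()) :=
    inv_eq_of_mul_eq_one_left (by linear_combination ht)
  have : (fun i => y (Sum.inr i) / y (Sum.inl ())) = (y (Sum.inl ()))⁻¹ • (y ∘ Sum.inr) := by
    ext i; simp [div_eq_inv_mul]
  rw [this, dotProduct_smul, smul_eq_mul, hinv]
  ring

end Dehomogenize

theorem stmt10_general {n : ℕ} (A : Matrix (Fin n) (Fin n) ℝ) (hA : A.IsHermitian)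
    (hnpd : ¬ A.PosDef) (a b : Fin n → ℝ) (c Δ : ℝ) (hΔ : 0 < Δ)
    (ts ls : ℝ) (hls : 0 ≤ ls)
    (hmax : ∀ t l : ℝ, 0 ≤ l → ktl A a b c Δ t l ≤ ktl A a b c Δ ts ls)
    (hlt : lambdaMin (borderD2 A a b ts ls) < lambdaMin A)
    (y : Unit ⊕ Fin n → ℝ) (hy1 : y ⬝ᵥ y = 1)
    (hy : (borderD2 A a b ts ls).mulVec y = lambdaMin (borderD2 A a b ts ls) • y) :
    y (Sum.inl ()) ≠ 0 ∧ pstar A a b c Δ = dstar A a b c Δ ∧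
    isOptimal A a b c Δ (fun i => y (Sum.inr i) / y (Sum.inl ())) := by
  have hy₀ : y (Sum.inl ()) ≠ 0 := eigenvector_apply_ne_zero hy1 hy
    (fun _ hv => lambdaMin_mul_le_dotProduct_borderD_mulVec hA _ ts hv) hlt
  have ht := mul_sq_eq_one_of_isMax_ktl hA hΔ hls hmax hlt hy1 hy
  obtain ⟨hbc, hcs⟩ := le_and_mul_eq_zero_of_isMax_ktl hA hΔ hls hmax hlt hy1 hy
  have hμ : 0 ≤ -lambdaMin (borderD2 A a b ts ls) := by
    linarith [hA.lambdaMin_nonpos_of_not_posDef hnpd]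
  have hxx := div_dotProduct_div_eq hy1 ht
  have hbx := dotProduct_div_eq ht b
  have hmin := lagr_le_lagr_of_mulVec_eq (c := c) (Δ := Δ) hA (by
    rw [homogenize_div_eq_inv_smul hy₀, Matrix.mulVec_smul, hy, smul_comm])
  set x := fun i => y (Sum.inr i) / y (Sum.inl ())
  have hlagr : lagr A a b c Δ x (-lambdaMin (borderD2 A a b ts ls)) ls = objQ A a x := by
    rw [lagr, hxx, hbx, hcs]; ring
  exact ⟨hy₀, pstar_eq_dstar_and_isOptimal_of_saddle hμ hls hxx.le (hbx ▸ hbc) hlagr hmin⟩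

/-- Theorem 4, item 1. -/
theorem stmt10 {n : ℕ} (hn : 1 ≤ n) (A : Matrix (Fin n) (Fin n) ℝ) (hA : A.IsHermitian)
    (hnpd : ¬ A.PosDef) (a b : Fin n → ℝ) (c Δ : ℝ) (hΔ : 0 < Δ)
    (hslater : ∃ x : Fin n → ℝ, x ⬝ᵥ x < Δ ∧ b ⬝ᵥ x < c)
    (ts ls : ℝ) (hls : 0 ≤ ls)
    (hmax : ∀ t l : ℝ, 0 ≤ l → ktl A a b c Δ t l ≤ ktl A a b c Δ ts ls)
    (hlt : lambdaMin (borderD2 A a b ts ls) < lambdaMin A)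
    (y : Unit ⊕ Fin n → ℝ) (hy1 : y ⬝ᵥ y = 1)
    (hy : (borderD2 A a b ts ls).mulVec y = lambdaMin (borderD2 A a b ts ls) • y) :
    y (Sum.inl ()) ≠ 0 ∧ pstar A a b c Δ = dstar A a b c Δ ∧
    isOptimal A a b c Δ (fun i => y (Sum.inr i) / y (Sum.inl ())) :=
  stmt10_general A hA hnpd a b c Δ hΔ ts ls hls hmax hlt y hy1 hy
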